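/- The only pairs of even integers (k, l) with 4 ≤ k ≤ l such that (k+l)·B_k·B_l / (l·B_k + k·B_l) = B_{k+l} are (k,l) ∈ {(4,4), (4,6), (4,10), (6,8)}, where B_m denotes the m-th Bernoulli number. -/

import Mathlib

/-!
Euler's formula `B_{2m} = (-1)^(m+1) · 2 (2m)! ζ(2m) / (2π)^(2m)` fixes the sign of `B_{2m}`,
and since `1 ≤ ζ(2m) ≤ ζ(4) < 1.1` for `m ≥ 2` it pins `|B_{2m}|` to `(2m)! / (2π)^(2m)` up to
a factor `1.1`; this quantity divided by `m` increases from `m = 3` on. For `k = 2a ≤ l = 2b`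
with `a + b ≥ 8` that growth makes the two sides of the cross-multiplied equation differ in sign
or in size, according to the parities of `a` and `b`. The pairs with `k + l < 16` are settled by
the values of `B_4, …, B_14`.
-/

open Real Finset

noncomputable def bernoulliGrowth (m : ℕ) : ℝ := (2 * m).factorial / (2 * π) ^ (2 * m)

lemma bernoulliGrowth_pos (m : ℕ) : 0 < bernoulliGrowth m := by
  have := pi_pos
  unfold bernoulliGrowth
  positivity

lemma bernoulliGrowth_add_mul (a j : ℕ) :
    bernoulliGrowth (a + j) * (2 * π) ^ (2 * j) =
      bernoulliGrowth a * (2 * a + 1).ascFactorial (2 * j) := by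
  have hP : (2 * π) ^ (2 * a) ≠ 0 := pow_ne_zero _ (by positivity)
  rw [bernoulliGrowth, bernoulliGrowth, mul_add, ← Nat.factorial_mul_ascFactorial, pow_add]
  field_simp
  push_cast
  ring

lemma bernoulliGrowth_succ_mul (m : ℕ) :
    bernoulliGrowth (m + 1) * (2 * π) ^ 2 = bernoulliGrowth m * ((2 * m + 1) * (2 * m + 2)) := by
  simpa [Nat.ascFactorial_succ, mul_comm, add_assoc] using bernoulliGrowth_add_mul m 1

lemma two_pi_sq_lt : (2 * π) ^ 2 < 39.7 := by nlinarith [pi_lt_d2, pi_pos]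

lemma bernoulliGrowth_div_lt_succ {m : ℕ} (hm : 3 ≤ m) :
    bernoulliGrowth m / m < bernoulliGrowth (m + 1) / (m + 1 : ℕ) := by
  push_cast
  have hP : 0 < (2 * π) ^ 2 := by positivity
  have hm' : (3 : ℝ) ≤ m := by exact_mod_cast hm
  have hratio : (2 * π) ^ 2 < 2 * m * (2 * m + 1) := by nlinarith [two_pi_sq_lt]
  have := bernoulliGrowth_pos m
  rw [div_lt_div_iff₀ (by positivity) (by positivity)]
  refine lt_of_mul_lt_mul_right ?_ hP.le
  calc bernoulliGrowth m * (m + 1) * (2 * π) ^ 2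
      < bernoulliGrowth m * (m + 1) * (2 * m * (2 * m + 1)) := by gcongr
    _ = bernoulliGrowth (m + 1) * (2 * π) ^ 2 * m := by rw [bernoulliGrowth_succ_mul]; ring
    _ = bernoulliGrowth (m + 1) * m * (2 * π) ^ 2 := by ring

lemma bernoulliGrowth_div_le {m n : ℕ} (hm : 3 ≤ m) (hmn : m ≤ n) :
    bernoulliGrowth m / m ≤ bernoulliGrowth n / n :=
  monotoneOn_nat_Ici_of_le_succ (f := fun k : ℕ => bernoulliGrowth k / k)
    (fun _ hk => (bernoulliGrowth_div_lt_succ hk).le) hm (hm.trans hmn) hmn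

lemma mul_lt_mul_bernoulliGrowth_of_le {x d : ℝ} {b₀ b : ℕ} (hd : 0 ≤ d) (hb₀ : 3 ≤ b₀)
    (hb : b₀ ≤ b) (h : b₀ * x < d * bernoulliGrowth b₀) :
    b * x < d * bernoulliGrowth b := by
  have hb₀' : (0 : ℝ) < b₀ := by positivity
  have hb' : (0 : ℝ) < b := by exact_mod_cast (by omega : 0 < b)
  have hx : x < d * (bernoulliGrowth b₀ / b₀) := by
    rwa [← mul_div_assoc, lt_div_iff₀' hb₀']
  have hx' := hx.trans_le (mul_le_mul_of_nonneg_left (bernoulliGrowth_div_le hb₀ hb) hd)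
  rwa [← mul_div_assoc, lt_div_iff₀' hb'] at hx'

lemma mul_lt_mul_bernoulliGrowth_add {x d : ℝ} {a j : ℕ}
    (h : x * (2 * π) ^ (2 * j) < d * (2 * a + 1).ascFactorial (2 * j)) :
    x * bernoulliGrowth a < d * bernoulliGrowth (a + j) := by
  have hP : 0 < (2 * π) ^ (2 * j) := by positivity
  have := bernoulliGrowth_pos a
  refine lt_of_mul_lt_mul_right ?_ hP.le
  calc x * bernoulliGrowth a * (2 * π) ^ (2 * j)
      = x * (2 * π) ^ (2 * j) * bernoulliGrowth a := by ring
    _ < d * (2 * a + 1).ascFactorial (2 * j) * bernoulliGrowth a := by gcongr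
    _ = d * bernoulliGrowth (a + j) * (2 * π) ^ (2 * j) := by
        linear_combination -d * bernoulliGrowth_add_mul a j

lemma zeta_four_mul_two_pi_pow_lt (j : ℕ) :
    π ^ 4 / 90 * (2 * π) ^ (2 * j) < 1.1 * 39.7 ^ j := by
  have hζ : π ^ 4 / 90 < 1.1 := by
    have := pow_lt_pow_left₀ pi_lt_d2 pi_pos.le (by norm_num : 4 ≠ 0)
    norm_num at this ⊢
    linarith
  rw [pow_mul]
  calc π ^ 4 / 90 * ((2 * π) ^ 2) ^ j < 1.1 * ((2 * π) ^ 2) ^ j := by gcongr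
    _ ≤ 1.1 * 39.7 ^ j := by gcongr; exact two_pi_sq_lt.le

lemma one_le_tsum_one_div_nat_pow {p : ℕ} (hp : 1 < p) : 1 ≤ ∑' n : ℕ, 1 / (n : ℝ) ^ p := by
  simpa using (Real.summable_one_div_nat_pow.mpr hp).le_tsum 1 (fun _ _ => by positivity)

lemma tsum_one_div_nat_pow_le_zeta_four {p : ℕ} (hp : 4 ≤ p) :
    ∑' n : ℕ, 1 / (n : ℝ) ^ p ≤ π ^ 4 / 90 := by
  rw [← hasSum_zeta_four.tsum_eq]
  refine (Real.summable_one_div_nat_pow.mpr (by omega)).tsum_le_tsum (fun n => ?_)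
    (Real.summable_one_div_nat_pow.mpr (by omega))
  rcases n.eq_zero_or_pos with rfl | hn
  · simp [zero_pow (by omega : p ≠ 0)]
  · exact one_div_le_one_div_of_le (by positivity) (pow_le_pow_right₀ (by exact_mod_cast hn) hp)

lemma bernoulli_two_mul_eq {m : ℕ} (hm : m ≠ 0) :
    (bernoulli (2 * m) : ℝ) =
      (-1) ^ (m + 1) * (2 * bernoulliGrowth m * ∑' n : ℕ, 1 / (n : ℝ) ^ (2 * m)) := by
  have h2 : (2 : ℝ) ^ (2 * m) = 2 * 2 ^ (2 * m - 1) := by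
    rw [← pow_succ']
    congr 1
    omega
  have hsq : ((-1 : ℝ) ^ (m + 1)) ^ 2 = 1 := by
    rw [← pow_mul]
    exact Even.neg_one_pow ⟨m + 1, by ring⟩
  have hπ : π ^ (2 * m) ≠ 0 := pow_ne_zero _ pi_ne_zero
  rw [(hasSum_zeta_nat hm).tsum_eq, bernoulliGrowth, mul_pow, h2]
  field_simp
  rw [hsq, mul_one]

lemma two_mul_bernoulliGrowth_mul_tsum_pos {m : ℕ} (hm : m ≠ 0) :
    0 < 2 * bernoulliGrowth m * ∑' n : ℕ, 1 / (n : ℝ) ^ (2 * m) :=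
  mul_pos (mul_pos two_pos (bernoulliGrowth_pos m))
    (one_pos.trans_le (one_le_tsum_one_div_nat_pow (by omega)))

lemma abs_bernoulli_two_mul {m : ℕ} (hm : m ≠ 0) :
    |(bernoulli (2 * m) : ℝ)| = 2 * bernoulliGrowth m * ∑' n : ℕ, 1 / (n : ℝ) ^ (2 * m) := by
  rw [bernoulli_two_mul_eq hm, abs_mul, abs_neg_one_pow, one_mul,
    abs_of_pos (two_mul_bernoulliGrowth_mul_tsum_pos hm)]

lemma bernoulli_two_mul_pos {m : ℕ} (hm : Odd m) : 0 < bernoulli (2 * m) := by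
  have h := bernoulli_two_mul_eq hm.pos.ne'
  rw [hm.add_one.neg_one_pow, one_mul] at h
  exact_mod_cast h ▸ two_mul_bernoulliGrowth_mul_tsum_pos hm.pos.ne'

lemma bernoulli_two_mul_neg {m : ℕ} (hm : Even m) (h0 : m ≠ 0) : bernoulli (2 * m) < 0 := by
  have h := bernoulli_two_mul_eq h0
  rw [hm.add_one.neg_one_pow, neg_one_mul] at h
  have : (bernoulli (2 * m) : ℝ) < 0 :=
    h ▸ neg_neg_of_pos (two_mul_bernoulliGrowth_mul_tsum_pos h0)
  exact_mod_cast this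

lemma bernoulli_two_mul_ne_zero {m : ℕ} (hm : m ≠ 0) : bernoulli (2 * m) ≠ 0 := by
  have h := abs_bernoulli_two_mul hm ▸ two_mul_bernoulliGrowth_mul_tsum_pos hm
  exact_mod_cast abs_pos.mp h

/-- `1.1` and `39.7` bound `ζ(4) = π⁴/90` and `(2π)²`; the hypothesis `h` is the case
`b = a + j`. -/
lemma mul_abs_bernoulli_lt_of_ascFactorial {a j b : ℕ} {d : ℚ} (ha : 2 ≤ a) (hd : 0 ≤ d)
    (hj : 3 ≤ a + j) (hb : a + j ≤ b)
    (h : ((a + j : ℕ) : ℚ) * (1.1 * 39.7 ^ j) ≤ d * (2 * a + 1).ascFactorial (2 * j)) :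
    (b : ℚ) * |bernoulli (2 * a)| < d * |bernoulli (2 * b)| := by
  have hbase : ((a + j : ℕ) : ℝ) * (π ^ 4 / 90 * bernoulliGrowth a) <
      d * bernoulliGrowth (a + j) := by
    rw [← mul_assoc]
    refine mul_lt_mul_bernoulliGrowth_add ?_
    have hpos : (0 : ℝ) < a + j := by positivity
    have h' := (Rat.cast_le (K := ℝ)).mpr h
    push_cast at h' ⊢
    calc ((a : ℝ) + j) * (π ^ 4 / 90) * (2 * π) ^ (2 * j)
        = ((a : ℝ) + j) * (π ^ 4 / 90 * (2 * π) ^ (2 * j)) := by ring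
      _ < ((a : ℝ) + j) * (1.1 * 39.7 ^ j) :=
          mul_lt_mul_of_pos_left (zeta_four_mul_two_pi_pow_lt j) hpos
      _ ≤ d * (2 * a + 1).ascFactorial (2 * j) := h'
  have hgrowth := mul_lt_mul_bernoulliGrowth_of_le (by exact_mod_cast hd) hj hb hbase
  have hζa := tsum_one_div_nat_pow_le_zeta_four (p := 2 * a) (by omega)
  have hζb := one_le_tsum_one_div_nat_pow (p := 2 * b) (by omega)
  have := bernoulliGrowth_pos a
  have := bernoulliGrowth_pos b
  suffices (b : ℝ) * |(bernoulli (2 * a) : ℝ)| < d * |(bernoulli (2 * b) : ℝ)| by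
    exact_mod_cast this
  rw [abs_bernoulli_two_mul (by omega), abs_bernoulli_two_mul (by omega)]
  calc (b : ℝ) * (2 * bernoulliGrowth a * ∑' n : ℕ, 1 / (n : ℝ) ^ (2 * a))
      = 2 * (b * ((∑' n : ℕ, 1 / (n : ℝ) ^ (2 * a)) * bernoulliGrowth a)) := by ring
    _ ≤ 2 * (b * (π ^ 4 / 90 * bernoulliGrowth a)) := by gcongr
    _ < 2 * (d * bernoulliGrowth b * 1) := by rw [mul_one]; gcongr
    _ ≤ 2 * (d * bernoulliGrowth b * ∑' n : ℕ, 1 / (n : ℝ) ^ (2 * b)) := by gcongr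
    _ = d * (2 * bernoulliGrowth b * ∑' n : ℕ, 1 / (n : ℝ) ^ (2 * b)) := by ring

lemma add_mul_abs_bernoulli_lt {a b : ℕ} (ha : 2 ≤ a) (hb : 4 ≤ b) :
    (a + b : ℚ) * |bernoulli (2 * a)| < |bernoulli (2 * (a + b))| := by
  have hasc : 2 * (a + 4) * (5 : ℕ).ascFactorial 7 ≤ (2 * a + 1).ascFactorial (2 * 4) := by
    rw [show (2 * a + 1).ascFactorial (2 * 4) = (2 * a + 1 + 7) * (2 * a + 1).ascFactorial 7 from
      Nat.ascFactorial_succ]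
    exact Nat.mul_le_mul (by omega) (Nat.ascFactorial_le 7 (by omega))
  have hasc' : (2 * (a + 4) * 1663200 : ℚ) ≤ (2 * a + 1).ascFactorial (2 * 4) := by
    exact_mod_cast (show (5 : ℕ).ascFactorial 7 = 1663200 by norm_num) ▸ hasc
  have hlt := mul_abs_bernoulli_lt_of_ascFactorial (j := 4) (b := a + b) (d := 1) ha zero_le_one
    (by omega) (by omega) (by push_cast; linarith)
  push_cast at hlt
  rwa [one_mul] at hlt

lemma mul_abs_bernoulli_lt_mul {a b : ℕ} (ha : 2 ≤ a) (hab : a < b) (h8 : 8 ≤ a + b) :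
    (b : ℚ) * |bernoulli (2 * a)| < a * |bernoulli (2 * b)| := by
  obtain rfl | rfl | ha4 : a = 2 ∨ a = 3 ∨ 4 ≤ a := by omega
  · exact mul_abs_bernoulli_lt_of_ascFactorial (j := 4) le_rfl (by norm_num) (by norm_num)
      (by omega) (by norm_num)
  · exact mul_abs_bernoulli_lt_of_ascFactorial (j := 2) (by norm_num) (by norm_num) (by norm_num)
      (by omega) (by norm_num)
  · refine mul_abs_bernoulli_lt_of_ascFactorial (j := 1) ha (by positivity) (by omega) (by omega) ?_
    have ha' : (4 : ℚ) ≤ a := by exact_mod_cast ha4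
    have key : (1.1 * 39.7 : ℚ) ≤ 2 * a * (2 * a + 1) := by nlinarith
    simp only [Nat.ascFactorial_succ, Nat.ascFactorial_zero]
    push_cast
    nlinarith [mul_le_mul_of_nonneg_left key (by positivity : (0 : ℚ) ≤ a + 1)]

lemma two_mul_mul_abs_bernoulli_lt_mul {a b : ℕ} (ha : 3 ≤ a) (ha4 : a ≠ 4) (hab : a < b)
    (h9 : 9 ≤ a + b) : 2 * b * |bernoulli (2 * a)| < a * |bernoulli (2 * b)| := by
  suffices (b : ℚ) * |bernoulli (2 * a)| < a / 2 * |bernoulli (2 * b)| by linarith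
  obtain rfl | ha5 : a = 3 ∨ 5 ≤ a := by omega
  · exact mul_abs_bernoulli_lt_of_ascFactorial (j := 3) (by norm_num) (by norm_num) (by norm_num)
      (by omega) (by norm_num)
  · refine mul_abs_bernoulli_lt_of_ascFactorial (j := 1) (by omega) (by positivity) (by omega)
      (by omega) ?_
    have ha' : (5 : ℚ) ≤ a := by exact_mod_cast ha5
    have key : (1.1 * 39.7 : ℚ) ≤ a * (2 * a + 1) := by nlinarith
    simp only [Nat.ascFactorial_succ, Nat.ascFactorial_zero]
    push_cast
    nlinarith [mul_le_mul_of_nonneg_left key (by positivity : (0 : ℚ) ≤ a + 1)]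

/-- For `k = 2a`, `l = 2b` this is `((l B_k + k B_l) B_{k+l} - (k + l) B_k B_l) / 2`. -/
def constantTermDefect (a b : ℕ) : ℚ :=
  bernoulli (2 * (a + b)) * (b * bernoulli (2 * a) + a * bernoulli (2 * b)) -
    (a + b) * bernoulli (2 * a) * bernoulli (2 * b)

lemma constantTermDefect_pos_of_even_of_even {a b : ℕ} (hae : Even a) (hbe : Even b)
    (ha : 2 ≤ a) (hb : 4 ≤ b) : 0 < constantTermDefect a b := by
  have hx := bernoulli_two_mul_neg hae (by omega)
  have hy := bernoulli_two_mul_neg hbe (by omega)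
  have hz := bernoulli_two_mul_neg (hae.add hbe) (by omega)
  have hC1 := add_mul_abs_bernoulli_lt ha hb
  rw [abs_of_neg hx, abs_of_neg hz] at hC1
  have ha' : (2 : ℚ) ≤ a := by exact_mod_cast ha
  have hb' : (0 : ℚ) < b := by positivity
  have hay : 0 < a * -bernoulli (2 * b) := mul_pos (by positivity) (neg_pos.2 hy)
  have hC1' := mul_lt_mul_of_pos_right hC1 hay
  calc 0 < bernoulli (2 * (a + b)) * (b * bernoulli (2 * a)) +
        (a - 1) * ((a + b) * (bernoulli (2 * a) * bernoulli (2 * b))) :=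
        add_pos_of_pos_of_nonneg (mul_pos_of_neg_of_neg hz (mul_neg_of_pos_of_neg hb' hx))
          (mul_nonneg (by linarith) (mul_nonneg (by positivity) (mul_pos_of_neg_of_neg hx hy).le))
    _ = bernoulli (2 * (a + b)) * (b * bernoulli (2 * a)) +
        (a + b) * -bernoulli (2 * a) * (a * -bernoulli (2 * b)) -
          (a + b) * bernoulli (2 * a) * bernoulli (2 * b) := by ring
    _ < bernoulli (2 * (a + b)) * (b * bernoulli (2 * a)) +
        -bernoulli (2 * (a + b)) * (a * -bernoulli (2 * b)) -
          (a + b) * bernoulli (2 * a) * bernoulli (2 * b) := by linarith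
    _ = constantTermDefect a b := by unfold constantTermDefect; ring

lemma constantTermDefect_pos_of_even_of_odd {a b : ℕ} (hae : Even a) (hbo : Odd b)
    (ha : 2 ≤ a) (hab : a < b) (h8 : 8 ≤ a + b) : 0 < constantTermDefect a b := by
  have hx := bernoulli_two_mul_neg hae (by omega)
  have hy := bernoulli_two_mul_pos hbo
  have hz := bernoulli_two_mul_pos (hae.add_odd hbo)
  have hC2 := mul_abs_bernoulli_lt_mul ha hab h8
  rw [abs_of_neg hx, abs_of_pos hy] at hC2
  have hlhs : (a + b) * bernoulli (2 * a) * bernoulli (2 * b) < 0 :=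
    mul_neg_of_neg_of_pos (mul_neg_of_pos_of_neg (by positivity) hx) hy
  have hrhs : 0 < bernoulli (2 * (a + b)) * (b * bernoulli (2 * a) + a * bernoulli (2 * b)) :=
    mul_pos hz (by linarith)
  unfold constantTermDefect
  linarith

lemma constantTermDefect_neg_of_odd_of_even {a b : ℕ} (hao : Odd a) (hbe : Even b)
    (ha : 3 ≤ a) (hab : a < b) (h9 : 9 ≤ a + b) : constantTermDefect a b < 0 := by
  have hx := bernoulli_two_mul_pos hao
  have hy := bernoulli_two_mul_neg hbe (by omega)
  have hz := bernoulli_two_mul_pos (hao.add_even hbe)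
  have hC1 := add_mul_abs_bernoulli_lt (a := a) (b := b) (by omega) (by omega)
  have hC3 := two_mul_mul_abs_bernoulli_lt_mul ha (by have := Nat.odd_iff.1 hao; omega) hab h9
  rw [abs_of_pos hx, abs_of_neg hy] at hC3
  rw [abs_of_pos hx, abs_of_pos hz] at hC1
  have ha' : (3 : ℚ) ≤ a := by exact_mod_cast ha
  have hay : (a : ℚ) * bernoulli (2 * b) < 0 := mul_neg_of_pos_of_neg (by positivity) hy
  have h2 := mul_lt_mul_of_pos_left (by linarith : (b : ℚ) * bernoulli (2 * a) +
    a * bernoulli (2 * b) < a * bernoulli (2 * b) / 2) hz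
  have h3 := mul_lt_mul_of_neg_right hC1 hay
  calc constantTermDefect a b
      < bernoulli (2 * (a + b)) * (a * bernoulli (2 * b) / 2) -
          (a + b) * bernoulli (2 * a) * bernoulli (2 * b) := by
        unfold constantTermDefect; linarith
    _ < (a + b) * bernoulli (2 * a) * (a * bernoulli (2 * b)) / 2 -
          (a + b) * bernoulli (2 * a) * bernoulli (2 * b) := by linarith
    _ = (a - 2) / 2 * ((a + b) * bernoulli (2 * a) * bernoulli (2 * b)) := by ring
    _ ≤ 0 := mul_nonpos_of_nonneg_of_nonpos (by linarith)
        (mul_neg_of_pos_of_neg (by positivity) hy).le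

lemma constantTermDefect_neg_of_odd_of_odd {a b : ℕ} (hao : Odd a) (hbo : Odd b) :
    constantTermDefect a b < 0 := by
  have hx := bernoulli_two_mul_pos hao
  have hy := bernoulli_two_mul_pos hbo
  have hz := bernoulli_two_mul_neg (hao.add_odd hbo) (by have := hao.pos; omega)
  have ha : (0 : ℚ) < a := by exact_mod_cast hao.pos
  have hb : (0 : ℚ) < b := by exact_mod_cast hbo.pos
  have hlhs : 0 < (a + b) * bernoulli (2 * a) * bernoulli (2 * b) :=
    mul_pos (mul_pos (add_pos ha hb) hx) hy
  have hrhs : bernoulli (2 * (a + b)) * (b * bernoulli (2 * a) + a * bernoulli (2 * b)) < 0 :=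
    mul_neg_of_neg_of_pos hz (add_pos (mul_pos hb hx) (mul_pos ha hy))
  unfold constantTermDefect
  linarith

lemma constantTermDefect_ne_zero {a b : ℕ} (ha : 2 ≤ a) (hab : a ≤ b) (h8 : 8 ≤ a + b) :
    constantTermDefect a b ≠ 0 := by
  rcases Nat.even_or_odd a with hae | hao <;> rcases Nat.even_or_odd b with hbe | hbo
  · exact (constantTermDefect_pos_of_even_of_even hae hbe ha (by omega)).ne'
  · have := Nat.even_iff.1 hae
    have := Nat.odd_iff.1 hbo
    exact (constantTermDefect_pos_of_even_of_odd hae hbo ha (by omega) h8).ne'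
  · have := Nat.odd_iff.1 hao
    have := Nat.even_iff.1 hbe
    exact (constantTermDefect_neg_of_odd_of_even hao hbe (by omega) (by omega) (by omega)).ne
  · exact (constantTermDefect_neg_of_odd_of_odd hao hbo).ne

lemma bernoulli'_six : bernoulli' 6 = 1 / 42 := by
  have h := sum_bernoulli' 7
  norm_num [sum_range_succ, bernoulli'_eq_zero_of_odd, Nat.odd_iff, Nat.choose] at h
  linarith

lemma bernoulli'_eight : bernoulli' 8 = -1 / 30 := by
  have h := sum_bernoulli' 9
  norm_num [sum_range_succ, bernoulli'_eq_zero_of_odd, Nat.odd_iff, Nat.choose, bernoulli'_six] at h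
  linarith

lemma bernoulli'_ten : bernoulli' 10 = 5 / 66 := by
  have h := sum_bernoulli' 11
  norm_num [sum_range_succ, bernoulli'_eq_zero_of_odd, Nat.odd_iff, Nat.choose, bernoulli'_six,
    bernoulli'_eight] at h
  linarith

lemma bernoulli'_twelve : bernoulli' 12 = -691 / 2730 := by
  have h := sum_bernoulli' 13
  norm_num [sum_range_succ, bernoulli'_eq_zero_of_odd, Nat.odd_iff, Nat.choose, bernoulli'_six,
    bernoulli'_eight, bernoulli'_ten] at h
  linarith

lemma bernoulli'_fourteen : bernoulli' 14 = 7 / 6 := by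
  have h := sum_bernoulli' 15
  norm_num [sum_range_succ, bernoulli'_eq_zero_of_odd, Nat.odd_iff, Nat.choose, bernoulli'_six,
    bernoulli'_eight, bernoulli'_ten, bernoulli'_twelve] at h
  linarith

/-- The only pairs of even integers `(k, l)` with `4 ≤ k ≤ l` satisfying
`(k+l) B_k B_l / (l B_k + k B_l) = B_{k+l}` are `(4,4), (4,6), (4,10), (6,8)`. -/
theorem bernoulli_constant_term_condition (k l : ℕ) (hke : Even k) (hle : Even l)
    (hk : 4 ≤ k) (hkl : k ≤ l) :
    ((k + l : ℚ) * bernoulli k * bernoulli l /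
        ((l : ℚ) * bernoulli k + (k : ℚ) * bernoulli l) = bernoulli (k + l)) ↔
      (k, l) ∈ ({(4, 4), (4, 6), (4, 10), (6, 8)} : Set (ℕ × ℕ)) := by
  obtain ⟨a, rfl⟩ := hke.two_dvd
  obtain ⟨b, rfl⟩ := hle.two_dvd
  rcases lt_or_ge (a + b) 8 with hsmall | hlarge
  · obtain ⟨rfl, rfl⟩ | ⟨rfl, rfl⟩ | ⟨rfl, rfl⟩ | ⟨rfl, rfl⟩ | ⟨rfl, rfl⟩ | ⟨rfl, rfl⟩ :
        (a = 2 ∧ b = 2) ∨ (a = 2 ∧ b = 3) ∨ (a = 2 ∧ b = 4) ∨ (a = 2 ∧ b = 5) ∨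
          (a = 3 ∧ b = 3) ∨ (a = 3 ∧ b = 4) := by omega
    all_goals norm_num [bernoulli_eq_bernoulli'_of_ne_one, bernoulli'_six, bernoulli'_eight,
      bernoulli'_ten, bernoulli'_twelve, bernoulli'_fourteen]
  · have hnot : (2 * a, 2 * b) ∉ ({(4, 4), (4, 6), (4, 10), (6, 8)} : Set (ℕ × ℕ)) := by
      simp only [Set.mem_insert_iff, Set.mem_singleton_iff, Prod.mk.injEq]; omega
    rw [iff_false_intro hnot, iff_false, ← mul_add]
    push_cast
    intro h
    by_cases hden : 2 * b * bernoulli (2 * a) + 2 * a * bernoulli (2 * b) = 0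
    · rw [hden, div_zero] at h
      exact bernoulli_two_mul_ne_zero (by omega) h.symm
    · rw [div_eq_iff hden] at h
      exact constantTermDefect_ne_zero (by omega) (by omega) hlarge
        (by unfold constantTermDefect; linear_combination -h / 2)
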